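/- Let S be the set of global minimizers of H on a finite connected graph Ω, let Φ̄ = max_{s, s' ∈ S} Φ(s, s'), and let Ω̄ = {η ∈ Ω : Φ(S, η) ≤ Φ̄}. Then Ω̄ is connected (as an induced subgraph) and contains S. -/

import Mathlib

open SimpleGraph

variable {Ω : Type*}

/-- The height of a walk: the maximum of the energy `H` along its support. -/
noncomputable def walkHeight (H : Ω → ℝ) {G : SimpleGraph Ω} {a b : Ω} (w : G.Walk a b) : ℝ :=
  (w.support.map H).foldr max (H b)

/-- The communication height between two vertices: minimal height over all paths. -/
noncomputable def commHeight (G : SimpleGraph Ω) (H : Ω → ℝ) (a b : Ω) : ℝ :=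
  sInf {h : ℝ | ∃ w : G.Walk a b, walkHeight H w = h}

/-- Outer boundary of a set of vertices. -/
def outerBoundary (G : SimpleGraph Ω) (A : Set Ω) : Set Ω :=
  {ξ | ξ ∉ A ∧ ∃ η ∈ A, G.Adj ξ η}

/-- A (nontrivial) cycle: nonempty, connected, proper, with `max_C H < min_{∂C} H`. -/
def IsCycleSet (G : SimpleGraph Ω) (H : Ω → ℝ) (C : Set Ω) : Prop :=
  C.Nonempty ∧ (G.induce C).Connected ∧ C ≠ Set.univ ∧
    ∀ η ∈ C, ∀ ξ ∈ outerBoundary G C, H η < H ξ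

/-- A stable plateau: nonempty, connected, constant energy, strictly higher on the boundary. -/
def IsStablePlateau (G : SimpleGraph Ω) (H : Ω → ℝ) (P : Set Ω) : Prop :=
  P.Nonempty ∧ (G.induce P).Connected ∧ (∀ x ∈ P, ∀ y ∈ P, H x = H y) ∧
    ∀ x ∈ P, ∀ ζ ∈ outerBoundary G P, H x < H ζ

/-- Communication height between two sets. -/
noncomputable def commHeightSet (G : SimpleGraph Ω) (H : Ω → ℝ) (A B : Set Ω) : ℝ :=
  sInf {h : ℝ | ∃ a ∈ A, ∃ b ∈ B, commHeight G H a b = h}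

/-- The bottom of a set: the minimizers of `H` on it. -/
def bottom (H : Ω → ℝ) (C : Set Ω) : Set Ω := {x ∈ C | ∀ y ∈ C, H x ≤ H y}

/-- `A` is a connected component of `S`: a maximal nonempty connected subset of `S`. -/
def IsConnectedComponentOf (G : SimpleGraph Ω) (S A : Set Ω) : Prop :=
  A ⊆ S ∧ A.Nonempty ∧ (G.induce A).Connected ∧
    ∀ B : Set Ω, A ⊆ B → B ⊆ S → (G.induce B).Connected → B = A

/-!
Take a ground state `s₀`. Every `η ∈ Ω̄` is joined to some ground state `s` by an optimal path of
height `Φ(s, η) ≤ Φ̄`, and `s₀` is joined to `s` by an optimal path of height `Φ(s₀, s) ≤ Φ̄`. Every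
vertex `x` on an optimal path from `s` has `Φ(s, x)` at most the height of that path, so both paths
run inside `Ω̄`, and `η` is reachable from `s₀` within `Ω̄`.
-/

theorem List.foldr_max_mem_cons {α : Type*} [LinearOrder α] (c : α) (l : List α) :
    l.foldr max c ∈ c :: l := by
  induction l with
  | nil => simp
  | cons y l ih =>
    rcases max_choice y (l.foldr max c) with h | h
    · simp [h]
    · rw [List.foldr_cons, h]
      rcases List.mem_cons.1 ih with h' | h' <;> simp [h']

theorem List.foldr_max_le_iff {α : Type*} [LinearOrder α] {c d : α} {l : List α} :
    l.foldr max c ≤ d ↔ c ≤ d ∧ ∀ x ∈ l, x ≤ d := by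
  induction l with
  | nil => simp
  | cons y l ih => simp only [List.foldr_cons, max_le_iff, ih, List.forall_mem_cons]; tauto

theorem SimpleGraph.Walk.reachable_induce_of_support_subset {G : SimpleGraph Ω} {a b : Ω}
    {A : Set Ω} (w : G.Walk a b) (hw : {x | x ∈ w.support} ⊆ A) :
    (G.induce A).Reachable ⟨a, hw w.start_mem_support⟩ ⟨b, hw w.end_mem_support⟩ :=
  (w.connected_induce_support.preconnected ⟨a, w.start_mem_support⟩
    ⟨b, w.end_mem_support⟩).map (induceHomOfLE G hw).toHom

section walkHeight

variable {G : SimpleGraph Ω} {a b : Ω} (H : Ω → ℝ)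

theorem walkHeight_le_iff (w : G.Walk a b) {c : ℝ} :
    walkHeight H w ≤ c ↔ ∀ x ∈ w.support, H x ≤ c := by
  simp only [walkHeight, List.foldr_max_le_iff, List.forall_mem_map, and_iff_right_iff_imp]
  exact fun h => h b w.end_mem_support

theorem exists_mem_support_walkHeight_eq (w : G.Walk a b) :
    ∃ x ∈ w.support, walkHeight H w = H x := by
  have hmem : walkHeight H w ∈ w.support.map H := by
    rcases List.mem_cons.1 (List.foldr_max_mem_cons (H b) (w.support.map H)) with h | h
    · rw [walkHeight, h]; exact List.mem_map_of_mem w.end_mem_support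
    · exact h
  obtain ⟨x, hx, hHx⟩ := List.mem_map.1 hmem
  exact ⟨x, hx, hHx.symm⟩

end walkHeight

section commHeight

variable [Finite Ω] {G : SimpleGraph Ω} (H : Ω → ℝ) {a b : Ω}

theorem finite_setOf_walkHeight (a b : Ω) :
    {h : ℝ | ∃ w : G.Walk a b, walkHeight H w = h}.Finite := by
  refine (Set.finite_range H).subset ?_
  rintro h ⟨w, rfl⟩
  obtain ⟨x, -, hx⟩ := exists_mem_support_walkHeight_eq H w
  exact ⟨x, hx.symm⟩

theorem commHeight_le_walkHeight (w : G.Walk a b) : commHeight G H a b ≤ walkHeight H w :=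
  csInf_le (finite_setOf_walkHeight H a b).bddBelow ⟨w, rfl⟩

theorem SimpleGraph.Reachable.exists_walkHeight_eq_commHeight (hab : G.Reachable a b) :
    ∃ w : G.Walk a b, walkHeight H w = commHeight G H a b := by
  obtain ⟨w⟩ := hab
  have hne : {h : ℝ | ∃ w : G.Walk a b, walkHeight H w = h}.Nonempty := ⟨_, w, rfl⟩
  exact hne.csInf_mem (finite_setOf_walkHeight H a b)

theorem commHeight_le_of_mem_support (w : G.Walk a b) {x : Ω} (hx : x ∈ w.support) :
    commHeight G H a x ≤ walkHeight H w := by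
  classical
  refine (commHeight_le_walkHeight H (w.takeUntil x hx)).trans ?_
  rw [walkHeight_le_iff]
  exact fun y hy => (walkHeight_le_iff H w).1 le_rfl y (w.support_takeUntil_subset_support hx hy)

theorem reachable_induce_of_commHeight_le (hab : G.Reachable a b) {A : Set Ω} {c : ℝ}
    (hA : ∀ x, commHeight G H a x ≤ c → x ∈ A) (h : commHeight G H a b ≤ c)
    (ha : a ∈ A) (hb : b ∈ A) : (G.induce A).Reachable ⟨a, ha⟩ ⟨b, hb⟩ := by
  obtain ⟨w, hw⟩ := hab.exists_walkHeight_eq_commHeight H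
  exact w.reachable_induce_of_support_subset fun x hx =>
    hA x ((commHeight_le_of_mem_support H w hx).trans (hw ▸ h))

theorem commHeightSet_singleton_le_iff {S : Set Ω} (hS : S.Nonempty) {η : Ω} {c : ℝ} :
    commHeightSet G H S {η} ≤ c ↔ ∃ s ∈ S, commHeight G H s η ≤ c := by
  have himage : {h : ℝ | ∃ s ∈ S, ∃ b ∈ ({η} : Set Ω), commHeight G H s b = h} =
      (commHeight G H · η) '' S := by
    ext; simp
  have hfin : ((commHeight G H · η) '' S).Finite := Set.toFinite _
  rw [commHeightSet, himage]
  constructor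
  · intro h
    obtain ⟨s, hs, hsη⟩ := (hS.image _).csInf_mem hfin
    exact ⟨s, hs, hsη.trans_le h⟩
  · rintro ⟨s, hs, h⟩
    exact (csInf_le hfin.bddBelow ⟨s, hs, rfl⟩).trans h

theorem connected_induce_setOf_commHeightSet_le (hG : G.Connected) {S : Set Ω}
    (hS : S.Nonempty) {c : ℝ} (hc : ∀ s ∈ S, ∀ s' ∈ S, commHeight G H s s' ≤ c) :
    (G.induce {η | commHeightSet G H S {η} ≤ c}).Connected := by
  set A := {η | commHeightSet G H S {η} ≤ c}
  have mem_A : ∀ s ∈ S, ∀ η, commHeight G H s η ≤ c → η ∈ A :=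
    fun s hs η h => (commHeightSet_singleton_le_iff H hS).2 ⟨s, hs, h⟩
  obtain ⟨s₀, hs₀⟩ := hS
  rw [connected_iff_exists_forall_reachable]
  refine ⟨⟨s₀, mem_A s₀ hs₀ s₀ (hc s₀ hs₀ s₀ hs₀)⟩, fun ⟨η, hη⟩ => ?_⟩
  obtain ⟨s, hs, hsη⟩ := (commHeightSet_singleton_le_iff H ⟨s₀, hs₀⟩).1 hη
  have hsA : s ∈ A := mem_A s hs s (hc s hs s hs)
  exact (reachable_induce_of_commHeight_le H (hG s₀ s) (mem_A s₀ hs₀) (hc s₀ hs₀ s hs) _ hsA).trans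
    (reachable_induce_of_commHeight_le H (hG s η) (mem_A s hs) hsη hsA hη)

end commHeight

theorem essential_set_connected_general [Fintype Ω] (G : SimpleGraph Ω)
    (hG : G.Connected) (H : Ω → ℝ)
    (S : Set Ω) (hS : S = {x | ∀ y, H x ≤ H y})
    (Φbar : ℝ) (hΦbar : Φbar = sSup {h : ℝ | ∃ s ∈ S, ∃ s' ∈ S, commHeight G H s s' = h})
    (Ωbar : Set Ω) (hΩbar : Ωbar = {η | commHeightSet G H S {η} ≤ Φbar}) :
    S ⊆ Ωbar ∧ (G.induce Ωbar).Connected := by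
  have : Nonempty Ω := hG.nonempty
  have hS_ne : S.Nonempty := hS ▸ Finite.exists_min H
  have hΦ : ∀ s ∈ S, ∀ s' ∈ S, commHeight G H s s' ≤ Φbar := by
    have hfin : {h : ℝ | ∃ s ∈ S, ∃ s' ∈ S, commHeight G H s s' = h}.Finite :=
      (Set.finite_range fun p : Ω × Ω => commHeight G H p.1 p.2).subset
        fun _ ⟨s, _, s', _, h⟩ => ⟨(s, s'), h⟩
    exact fun s hs s' hs' => hΦbar ▸ le_csSup hfin.bddAbove ⟨s, hs, s', hs', rfl⟩
  subst hΩbar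
  exact ⟨fun s hs => (commHeightSet_singleton_le_iff H hS_ne).2 ⟨s, hs, hΦ s hs s hs⟩,
    connected_induce_setOf_commHeightSet_le H hG hS_ne hΦ⟩

/-- the essential set `Ω̄` contains the ground states and is connected. -/
theorem essential_set_connected [Fintype Ω] [Nonempty Ω] (G : SimpleGraph Ω)
    (hG : G.Connected) (H : Ω → ℝ)
    (S : Set Ω) (hS : S = {x | ∀ y, H x ≤ H y})
    (Φbar : ℝ) (hΦbar : Φbar = sSup {h : ℝ | ∃ s ∈ S, ∃ s' ∈ S, commHeight G H s s' = h})
    (Ωbar : Set Ω) (hΩbar : Ωbar = {η | commHeightSet G H S {η} ≤ Φbar}) :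
    S ⊆ Ωbar ∧ (G.induce Ωbar).Connected :=
  essential_set_connected_general G hG H S hS Φbar hΦbar Ωbar hΩbar
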